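/- Main lemma (reflect/reify): (1) If Γ ⊢ M ↔ N : A (algorithmic path equivalence) then Γ ⊢ M ≈ N : A (logical equivalence); (2) if Γ ⊢ M ≈ N : A then Γ ⊢ M ⇔ N : A (algorithmic term equivalence). Both are proved by mutual induction on the type A. -/

import Mathlib

/-- Simple types: base type `i` and function types. -/
inductive Ty : Type
  | base : Ty
  | arr  : Ty → Ty → Ty

/-- Untyped lambda terms with de Bruijn indices. -/
inductive Tm : Type
  | var : ℕ → Tm
  | lam : Tm → Tm
  | app : Tm → Tm → Tm

namespace Tm

def upRen (ρ : ℕ → ℕ) : ℕ → ℕ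
  | 0 => 0
  | n + 1 => ρ n + 1

/-- Renaming. -/
def rename (ρ : ℕ → ℕ) : Tm → Tm
  | var n => var (ρ n)
  | lam M => lam (rename (upRen ρ) M)
  | app M N => app (rename ρ M) (rename ρ N)

/-- Lifting a simultaneous substitution under a binder. -/
def lift (σ : ℕ → Tm) : ℕ → Tm
  | 0 => var 0
  | n + 1 => rename Nat.succ (σ n)

/-- Simultaneous (capture-avoiding) substitution. -/
def subst (σ : ℕ → Tm) : Tm → Tm
  | var n => σ n
  | lam M => lam (subst (lift σ) M)
  | app M N => app (subst σ M) (subst σ N)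

/-- Extending a substitution with a term for the top variable. -/
def scons (N : Tm) (σ : ℕ → Tm) : ℕ → Tm
  | 0 => N
  | n + 1 => σ n

/-- Substitution of a single term for the top variable. -/
def subst1 (N M : Tm) : Tm := subst (scons N var) M

end Tm

/-- Single-step weak head reduction. -/
inductive Step : Tm → Tm → Prop
  | beta {M N : Tm} : Step (Tm.app (Tm.lam M) N) (Tm.subst1 N M)
  | app {M M' N : Tm} : Step M M' → Step (Tm.app M N) (Tm.app M' N)

/-- Multi-step weak head reduction (reflexive-transitive closure). -/
inductive MStep : Tm → Tm → Prop
  | refl {M : Tm} : MStep M M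
  | trans1 {M M' M'' : Tm} : Step M M' → MStep M' M'' → MStep M M''

/-- Paths (neutral terms): a variable applied to arguments. -/
inductive IsPath : Tm → Prop
  | var {n : ℕ} : IsPath (Tm.var n)
  | app {M N : Tm} : IsPath M → IsPath (Tm.app M N)

/-- Typing contexts (de Bruijn): the `n`-th entry types variable `n`. -/
abbrev Ctx := List Ty

mutual
  /-- Algorithmic term equivalence `Γ ⊢ M ⇔ N : A`. -/
  inductive AlgTm : Ctx → Tm → Tm → Ty → Prop
    | base {Γ : Ctx} {M N P Q : Tm} :
        MStep M P → MStep N Q → AlgPath Γ P Q Ty.base → AlgTm Γ M N Ty.base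
    | arr {Γ : Ctx} {M N : Tm} {A B : Ty} :
        AlgTm (A :: Γ) (Tm.app (Tm.rename Nat.succ M) (Tm.var 0))
                       (Tm.app (Tm.rename Nat.succ N) (Tm.var 0)) B →
        AlgTm Γ M N (Ty.arr A B)

  /-- Algorithmic path equivalence `Γ ⊢ M ↔ N : A`. -/
  inductive AlgPath : Ctx → Tm → Tm → Ty → Prop
    | var {Γ : Ctx} {n : ℕ} {A : Ty} :
        Γ[n]? = some A → AlgPath Γ (Tm.var n) (Tm.var n) A
    | app {Γ : Ctx} {M1 M2 N1 N2 : Tm} {A B : Ty} :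
        AlgPath Γ M1 M2 (Ty.arr A B) → AlgTm Γ N1 N2 A →
        AlgPath Γ (Tm.app M1 N1) (Tm.app M2 N2) B
end

/-- `PathSub Δ π Γ`: π maps each variable `x:T` of Γ to a path `P` with `Δ ⊢ P ↔ P : T`. -/
def PathSub (Δ : Ctx) (π : ℕ → Tm) (Γ : Ctx) : Prop :=
  ∀ n A, Γ[n]? = some A → AlgPath Δ (π n) (π n) A

/-- Logical equivalence `Γ ⊢ M ≈ N : A`, defined by recursion on the type. -/
def Log : Ty → Ctx → Tm → Tm → Prop
  | Ty.base => fun Γ M N => AlgTm Γ M N Ty.base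
  | Ty.arr A B => fun Γ M N =>
      ∀ (Δ : Ctx) (π : ℕ → Tm), PathSub Δ π Γ →
        ∀ N1 N2, Log A Δ N1 N2 →
          Log B Δ (Tm.app (Tm.subst π M) N1) (Tm.app (Tm.subst π N) N2)

/-- `LogSub Δ σ1 σ2 Γ`: the substitutions σ1, σ2 are pointwise logically related at Γ. -/
def LogSub (Δ : Ctx) (σ1 σ2 : ℕ → Tm) (Γ : Ctx) : Prop :=
  ∀ n A, Γ[n]? = some A → Log A Δ (σ1 n) (σ2 n)

/-- Declarative equivalence `Γ ⊢ M ≡ N : A`. -/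
inductive Decl : Ctx → Tm → Tm → Ty → Prop
  | beta {Γ : Ctx} {M1 M2 N1 N2 : Tm} {A B : Ty} :
      Decl (A :: Γ) M2 N2 B → Decl Γ M1 N1 A →
      Decl Γ (Tm.app (Tm.lam M2) M1) (Tm.subst1 N1 N2) B
  | lam {Γ : Ctx} {M N : Tm} {A B : Ty} :
      Decl (A :: Γ) M N B → Decl Γ (Tm.lam M) (Tm.lam N) (Ty.arr A B)
  | ext {Γ : Ctx} {M N : Tm} {A B : Ty} :
      Decl (A :: Γ) (Tm.app (Tm.rename Nat.succ M) (Tm.var 0))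
                    (Tm.app (Tm.rename Nat.succ N) (Tm.var 0)) B →
      Decl Γ M N (Ty.arr A B)
  | var {Γ : Ctx} {n : ℕ} {A : Ty} :
      Γ[n]? = some A → Decl Γ (Tm.var n) (Tm.var n) A
  | app {Γ : Ctx} {M1 M2 N1 N2 : Tm} {A B : Ty} :
      Decl Γ M1 M2 (Ty.arr A B) → Decl Γ N1 N2 A →
      Decl Γ (Tm.app M1 N1) (Tm.app M2 N2) B
  | symm {Γ : Ctx} {M N : Tm} {A : Ty} : Decl Γ M N A → Decl Γ N M A
  | trans {Γ : Ctx} {M N O : Tm} {A : Ty} :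
      Decl Γ M N A → Decl Γ N O A → Decl Γ M O A

namespace Tm

theorem upRen_comp (ρ' ρ : ℕ → ℕ) : upRen ρ' ∘ upRen ρ = upRen (ρ' ∘ ρ) := by
  funext n; cases n <;> rfl

theorem rename_rename (ρ' ρ : ℕ → ℕ) (M : Tm) :
    rename ρ' (rename ρ M) = rename (ρ' ∘ ρ) M := by
  induction M generalizing ρ' ρ with
  | var n => rfl
  | lam M ih => simp [rename, ih, upRen_comp]
  | app M N ihM ihN => simp [rename, ihM, ihN]

theorem lift_upRen (σ : ℕ → Tm) (ρ : ℕ → ℕ) : lift σ ∘ upRen ρ = lift (σ ∘ ρ) := by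
  funext n; cases n <;> rfl

theorem subst_rename (σ : ℕ → Tm) (ρ : ℕ → ℕ) (M : Tm) :
    subst σ (rename ρ M) = subst (σ ∘ ρ) M := by
  induction M generalizing σ ρ with
  | var n => rfl
  | lam M ih => simp [rename, subst, ih, lift_upRen]
  | app M N ihM ihN => simp [rename, subst, ihM, ihN]

theorem rename_lift (ρ : ℕ → ℕ) (σ : ℕ → Tm) :
    rename (upRen ρ) ∘ lift σ = lift (rename ρ ∘ σ) := by
  funext n
  cases n with
  | zero => rfl
  | succ n =>
    show rename (upRen ρ) (rename Nat.succ (σ n)) = rename Nat.succ (rename ρ (σ n))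
    rw [rename_rename, rename_rename]
    rfl

theorem rename_subst (ρ : ℕ → ℕ) (σ : ℕ → Tm) (M : Tm) :
    rename ρ (subst σ M) = subst (rename ρ ∘ σ) M := by
  induction M generalizing ρ σ with
  | var n => rfl
  | lam M ih => simp [rename, subst, ih, rename_lift]
  | app M N ihM ihN => simp [rename, subst, ihM, ihN]

theorem lift_comp (σ' σ : ℕ → Tm) :
    (fun n => subst (lift σ') (lift σ n)) = lift (fun n => subst σ' (σ n)) := by
  funext n
  cases n with
  | zero => rfl
  | succ n =>
    show subst (lift σ') (rename Nat.succ (σ n)) = rename Nat.succ (subst σ' (σ n))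
    rw [subst_rename, rename_subst]
    rfl

theorem subst_subst (σ' σ : ℕ → Tm) (M : Tm) :
    subst σ' (subst σ M) = subst (fun n => subst σ' (σ n)) M := by
  induction M generalizing σ' σ with
  | var n => rfl
  | lam M ih => simp [subst, ih, lift_comp]
  | app M N ihM ihN => simp [subst, ihM, ihN]

theorem lift_var_comp (ρ : ℕ → ℕ) :
    lift (fun n => var (ρ n)) = fun n => var (upRen ρ n) := by
  funext n; cases n <;> rfl

theorem lift_var : lift var = var := by
  funext n; cases n <;> rfl

theorem subst_var (M : Tm) : subst var M = M := by
  induction M with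
  | var n => rfl
  | lam M ih => simp [subst, lift_var, ih]
  | app M N ihM ihN => simp [subst, ihM, ihN]

theorem rename_eq_subst (ρ : ℕ → ℕ) (M : Tm) :
    rename ρ M = subst (fun n => var (ρ n)) M := by
  induction M generalizing ρ with
  | var n => rfl
  | lam M ih => simp [rename, subst, ih, lift_var_comp]
  | app M N ihM ihN => simp [rename, subst, ihM, ihN]

theorem rename_subst1 (ρ : ℕ → ℕ) (N M : Tm) :
    rename ρ (subst1 N M) = subst1 (rename ρ N) (rename (upRen ρ) M) := by
  unfold subst1
  rw [rename_subst, subst_rename]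
  congr 1
  funext n; cases n <;> rfl

theorem subst_subst1 (σ : ℕ → Tm) (N M : Tm) :
    subst σ (subst1 N M) = subst1 (subst σ N) (subst (lift σ) M) := by
  unfold subst1
  rw [subst_subst, subst_subst]
  congr 1
  funext n
  cases n with
  | zero => rfl
  | succ n =>
    show σ n = subst (scons (subst σ N) var) (rename Nat.succ (σ n))
    rw [subst_rename]
    have : (scons (subst σ N) var ∘ Nat.succ) = var := by funext m; rfl
    rw [this, subst_var]

end Tm

theorem Step.renamed {M M' : Tm} (h : Step M M') (ρ : ℕ → ℕ) :
    Step (Tm.rename ρ M) (Tm.rename ρ M') := by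
  induction h generalizing ρ with
  | @beta M N =>
    show Step (Tm.app (Tm.lam _) _) _
    rw [Tm.rename_subst1]
    exact Step.beta
  | app _ ih => exact Step.app (ih ρ)

theorem Step.substed {M M' : Tm} (h : Step M M') (σ : ℕ → Tm) :
    Step (Tm.subst σ M) (Tm.subst σ M') := by
  induction h generalizing σ with
  | @beta M N =>
    show Step (Tm.app (Tm.lam _) _) _
    rw [Tm.subst_subst1]
    exact Step.beta
  | app _ ih => exact Step.app (ih σ)

theorem MStep.renamed {M M' : Tm} (h : MStep M M') (ρ : ℕ → ℕ) :
    MStep (Tm.rename ρ M) (Tm.rename ρ M') := by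
  induction h with
  | refl => exact MStep.refl
  | trans1 s _ ih => exact MStep.trans1 (s.renamed ρ) ih

theorem MStep.substed {M M' : Tm} (h : MStep M M') (σ : ℕ → Tm) :
    MStep (Tm.subst σ M) (Tm.subst σ M') := by
  induction h with
  | refl => exact MStep.refl
  | trans1 s _ ih => exact MStep.trans1 (s.substed σ) ih

/-- Renamings that respect contexts. -/
def Ren (Δ : Ctx) (ρ : ℕ → ℕ) (Γ : Ctx) : Prop :=
  ∀ n A, Γ[n]? = some A → Δ[ρ n]? = some A

theorem Ren.up {Δ : Ctx} {ρ : ℕ → ℕ} {Γ : Ctx} (h : Ren Δ ρ Γ) (A : Ty) :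
    Ren (A :: Δ) (Tm.upRen ρ) (A :: Γ) := by
  intro n B hn
  cases n with
  | zero => exact hn
  | succ n => exact h n B hn

section AlgRen

theorem alg_ren :
    (∀ {Γ M N A}, AlgTm Γ M N A → ∀ Δ ρ, Ren Δ ρ Γ →
        AlgTm Δ (Tm.rename ρ M) (Tm.rename ρ N) A) ∧
    (∀ {Γ M N A}, AlgPath Γ M N A → ∀ Δ ρ, Ren Δ ρ Γ →
        AlgPath Δ (Tm.rename ρ M) (Tm.rename ρ N) A) := by
  refine ⟨fun h => AlgTm.rec (motive_1 := fun Γ M N A _ => ∀ Δ ρ, Ren Δ ρ Γ →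
      AlgTm Δ (Tm.rename ρ M) (Tm.rename ρ N) A)
    (motive_2 := fun Γ M N A _ => ∀ Δ ρ, Ren Δ ρ Γ →
      AlgPath Δ (Tm.rename ρ M) (Tm.rename ρ N) A) ?_ ?_ ?_ ?_ h,
    fun h => AlgPath.rec (motive_1 := fun Γ M N A _ => ∀ Δ ρ, Ren Δ ρ Γ →
      AlgTm Δ (Tm.rename ρ M) (Tm.rename ρ N) A)
    (motive_2 := fun Γ M N A _ => ∀ Δ ρ, Ren Δ ρ Γ →
      AlgPath Δ (Tm.rename ρ M) (Tm.rename ρ N) A) ?_ ?_ ?_ ?_ h⟩ <;>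
  [skip; skip; skip; skip; skip; skip; skip; skip] <;>
  first
  | (intro Γ M N P Q hMP hNQ _ ih Δ ρ hρ
     exact AlgTm.base (hMP.renamed ρ) (hNQ.renamed ρ) (ih Δ ρ hρ))
  | (intro Γ M N A B _ ih Δ ρ hρ
     apply AlgTm.arr
     have := ih (A :: Δ) (Tm.upRen ρ) (Ren.up hρ A)
     have e : ∀ P : Tm, Tm.rename (Tm.upRen ρ) (Tm.app (Tm.rename Nat.succ P) (Tm.var 0))
         = Tm.app (Tm.rename Nat.succ (Tm.rename ρ P)) (Tm.var 0) := by
       intro P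
       simp only [Tm.rename, Tm.rename_rename]
       rfl
     rwa [e M, e N] at this)
  | (intro Γ n A hn Δ ρ hρ
     exact AlgPath.var (hρ n A hn))
  | (intro Γ M1 M2 N1 N2 A B _ _ ih1 ih2 Δ ρ hρ
     exact AlgPath.app (ih1 Δ ρ hρ) (ih2 Δ ρ hρ))

end AlgRen

theorem PathSub.lift {Δ : Ctx} {π : ℕ → Tm} {Γ : Ctx} (h : PathSub Δ π Γ) (A : Ty) :
    PathSub (A :: Δ) (Tm.lift π) (A :: Γ) := by
  intro n B hn
  cases n with
  | zero =>
    cases hn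
    exact AlgPath.var rfl
  | succ n =>
    exact alg_ren.2 (h n B hn) (A :: Δ) Nat.succ (fun m C hm => hm)

theorem alg_subst :
    (∀ {Γ M N A}, AlgTm Γ M N A → ∀ Δ π, PathSub Δ π Γ →
        AlgTm Δ (Tm.subst π M) (Tm.subst π N) A) ∧
    (∀ {Γ M N A}, AlgPath Γ M N A → ∀ Δ π, PathSub Δ π Γ →
        AlgPath Δ (Tm.subst π M) (Tm.subst π N) A) := by
  refine ⟨fun h => AlgTm.rec (motive_1 := fun Γ M N A _ => ∀ Δ π, PathSub Δ π Γ →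
      AlgTm Δ (Tm.subst π M) (Tm.subst π N) A)
    (motive_2 := fun Γ M N A _ => ∀ Δ π, PathSub Δ π Γ →
      AlgPath Δ (Tm.subst π M) (Tm.subst π N) A) ?_ ?_ ?_ ?_ h,
    fun h => AlgPath.rec (motive_1 := fun Γ M N A _ => ∀ Δ π, PathSub Δ π Γ →
      AlgTm Δ (Tm.subst π M) (Tm.subst π N) A)
    (motive_2 := fun Γ M N A _ => ∀ Δ π, PathSub Δ π Γ →
      AlgPath Δ (Tm.subst π M) (Tm.subst π N) A) ?_ ?_ ?_ ?_ h⟩ <;>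
  [skip; skip; skip; skip; skip; skip; skip; skip] <;>
  first
  | (intro Γ M N P Q hMP hNQ _ ih Δ π hπ
     exact AlgTm.base (hMP.substed π) (hNQ.substed π) (ih Δ π hπ))
  | (intro Γ M N A B _ ih Δ π hπ
     apply AlgTm.arr
     have := ih (A :: Δ) (Tm.lift π) (PathSub.lift hπ A)
     have e : ∀ P : Tm, Tm.subst (Tm.lift π) (Tm.app (Tm.rename Nat.succ P) (Tm.var 0))
         = Tm.app (Tm.rename Nat.succ (Tm.subst π P)) (Tm.var 0) := by
       intro P
       simp only [Tm.subst, Tm.subst_rename, Tm.rename_subst]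
       rfl
     rwa [e M, e N] at this)
  | (intro Γ n A hn Δ π hπ
     exact hπ n A hn)
  | (intro Γ M1 M2 N1 N2 A B _ _ ih1 ih2 Δ π hπ
     exact AlgPath.app (ih1 Δ π hπ) (ih2 Δ π hπ))

theorem main_aux (A : Ty) : ∀ (Γ : Ctx) (M N : Tm),
    (AlgPath Γ M N A → Log A Γ M N) ∧ (Log A Γ M N → AlgTm Γ M N A) := by
  induction A with
  | base =>
    intro Γ M N
    exact ⟨fun h => AlgTm.base MStep.refl MStep.refl h, fun h => h⟩
  | arr A B ihA ihB =>
    intro Γ M N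
    constructor
    · intro h Δ π hπ N1 N2 hN
      apply (ihB Δ _ _).1
      exact AlgPath.app (alg_subst.2 h Δ π hπ) ((ihA Δ N1 N2).2 hN)
    · intro h
      apply AlgTm.arr
      have hps : PathSub (A :: Γ) (fun n => Tm.var (n + 1)) Γ := by
        intro n C hn
        exact AlgPath.var hn
      have h0 : Log A (A :: Γ) (Tm.var 0) (Tm.var 0) :=
        (ihA (A :: Γ) (Tm.var 0) (Tm.var 0)).1 (AlgPath.var rfl)
      have := h (A :: Γ) (fun n => Tm.var (n + 1)) hps (Tm.var 0) (Tm.var 0) h0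
      rw [show (Tm.subst (fun n => Tm.var (n + 1)) M) = Tm.rename Nat.succ M from
            (Tm.rename_eq_subst Nat.succ M).symm,
          show (Tm.subst (fun n => Tm.var (n + 1)) N) = Tm.rename Nat.succ N from
            (Tm.rename_eq_subst Nat.succ N).symm] at this
      exact (ihB (A :: Γ) _ _).2 this

/-- Main lemma (reflect/reify). -/
theorem main_lemma (A : Ty) (Gamma : Ctx) (M N : Tm) :
    (AlgPath Gamma M N A -> Log A Gamma M N) ∧
    (Log A Gamma M N -> AlgTm Gamma M N A) := main_aux A Gamma M N
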